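/- arXiv:nlin/0502037 — 4 statements merged into one kernel-verified Lean document; each statement's English description precedes it below -/
import Mathlib

section
/- Conversely, if a local CA rule f : {0,1}^3 → {0,1} is number-conserving on cyclic configurations of every length L ≥ 1, then the function J(x0,x1) := -f(0,0,x0) - f(0,x0,x1) + x0 satisfies f(x0,x1,x2) - x1 = J(x0,x1) - J(x1,x2) for all x0,x1,x2 ∈ {0,1}. -/
/-!
Number conservation, tested on five small cyclic configurations (the two constant ones of length 1,
the alternating one of length 2, a single particle in length 3 and an adjacent pair in length 4),
yields five linear relations among the eight values of `f` on `{0,1}³`. At each of the eight triples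
the flux identity is a linear consequence of these relations.
-/

def IsNumberConserving (f : ℤ → ℤ → ℤ → ℤ) : Prop :=
  ∀ (L : ℕ) [NeZero L] (s : ZMod L → ℤ), (∀ i, s i = 0 ∨ s i = 1) →
    ∑ i : ZMod L, f (s (i - 1)) (s i) (s (i + 1)) = ∑ i : ZMod L, s i

namespace IsNumberConserving

variable {f : ℤ → ℤ → ℤ → ℤ}

/-- `ZMod (n + 1)` is `Fin (n + 1)` by definition; stated over `Fin`, the sums for a concrete
configuration `![…]` unfold by `simp`. -/
theorem sum_fin (hf : IsNumberConserving f) (n : ℕ) (s : Fin (n + 1) → ℤ)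
    (hs : ∀ i, s i = 0 ∨ s i = 1) :
    ∑ i, f (s (i - 1)) (s i) (s (i + 1)) = ∑ i, s i :=
  hf (n + 1) s hs

theorem apply_const (hf : IsNumberConserving f) {a : ℤ} (ha : a = 0 ∨ a = 1) : f a a a = a := by
  simpa using hf.sum_fin 0 (fun _ => a) (fun _ => ha)

theorem alternating (hf : IsNumberConserving f) : f 0 1 0 + f 1 0 1 = 1 := by
  simpa [Fin.sum_univ_two] using hf.sum_fin 1 ![1, 0] (by decide)

theorem single_particle (hf : IsNumberConserving f) : f 0 1 0 + f 1 0 0 + f 0 0 1 = 1 := by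
  simpa [Fin.sum_univ_three] using hf.sum_fin 2 ![1, 0, 0] (by decide)

theorem particle_pair (hf : IsNumberConserving f) :
    f 0 1 1 + f 1 1 0 + f 1 0 0 + f 0 0 1 = 2 := by
  simpa [Fin.sum_univ_four] using hf.sum_fin 3 ![1, 1, 0, 0] (by decide)

end IsNumberConserving

theorem number_conserving_implies_current_general
    (f : ℤ → ℤ → ℤ → ℤ)
    (hcons : ∀ (L : ℕ) [NeZero L] (s : ZMod L → ℤ),
      (∀ i, s i = 0 ∨ s i = 1) →
      ∑ i : ZMod L, f (s (i - 1)) (s i) (s (i + 1)) = ∑ i : ZMod L, s i) :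
    ∀ x0 x1 x2 : ℤ, (x0 = 0 ∨ x0 = 1) → (x1 = 0 ∨ x1 = 1) →
      (x2 = 0 ∨ x2 = 1) →
      f x0 x1 x2 - x1 =
        (-f 0 0 x0 - f 0 x0 x1 + x0) - (-f 0 0 x1 - f 0 x1 x2 + x1) := by
  have hf : IsNumberConserving f := hcons
  have h000 : f 0 0 0 = 0 := hf.apply_const (by norm_num)
  have h111 : f 1 1 1 = 1 := hf.apply_const (by norm_num)
  have h01 := hf.alternating
  have h100 := hf.single_particle
  have h110 := hf.particle_pair
  rintro x0 x1 x2 (rfl | rfl) (rfl | rfl) (rfl | rfl) <;> linarith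

/-- Conversely, if a binary local rule f is number-conserving on cyclic
configurations of every length, then J(x0,x1) = -f(0,0,x0) - f(0,x0,x1) + x0
satisfies the discrete conservation law. -/
theorem number_conserving_implies_current
    (f : ℤ → ℤ → ℤ → ℤ)
    (hf : ∀ x0 x1 x2 : ℤ, (x0 = 0 ∨ x0 = 1) → (x1 = 0 ∨ x1 = 1) →
      (x2 = 0 ∨ x2 = 1) → (f x0 x1 x2 = 0 ∨ f x0 x1 x2 = 1))
    (hcons : ∀ (L : ℕ) [NeZero L] (s : ZMod L → ℤ),
      (∀ i, s i = 0 ∨ s i = 1) →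
      ∑ i : ZMod L, f (s (i - 1)) (s i) (s (i + 1)) = ∑ i : ZMod L, s i) :
    ∀ x0 x1 x2 : ℤ, (x0 = 0 ∨ x0 = 1) → (x1 = 0 ∨ x1 = 1) →
      (x2 = 0 ∨ x2 = 1) →
      f x0 x1 x2 - x1 =
        (-f 0 0 x0 - f 0 x0 x1 + x0) - (-f 0 0 x1 - f 0 x1 x2 + x1) :=
  number_conserving_implies_current_general f hcons
end

section
/- Rule 142, with local function f given by the truth table f(0,0,0)=0, f(0,0,1)=1, f(0,1,0)=1, f(0,1,1)=1, f(1,0,0)=0, f(1,0,1)=0, f(1,1,0)=0, f(1,1,1)=1, conserves the number of '10' blocks: for every L ≥ 1 and every cyclic configuration s : ZMod L → {0,1}, Σ_i s'(i)*(1 - s'(i+1)) = Σ_i s(i)*(1 - s(i+1)), where s' is the updated configuration. -/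
/-- Rule 142 conserves the number of '10' blocks on cyclic configurations. -/
theorem rule142_conserves_10_blocks
    (f : ℤ → ℤ → ℤ → ℤ)
    (h000 : f 0 0 0 = 0) (h001 : f 0 0 1 = 1) (h010 : f 0 1 0 = 1)
    (h011 : f 0 1 1 = 1) (h100 : f 1 0 0 = 0) (h101 : f 1 0 1 = 0)
    (h110 : f 1 1 0 = 0) (h111 : f 1 1 1 = 1)
    (L : ℕ) [NeZero L]
    (s : ZMod L → ℤ) (hs : ∀ i, s i = 0 ∨ s i = 1) :
    ∑ i : ZMod L,
        (f (s (i - 1)) (s i) (s (i + 1))) *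
          (1 - f (s i) (s (i + 1)) (s (i + 2))) =
      ∑ i : ZMod L, s i * (1 - s (i + 1)) := by
  have key : ∀ a b c d : ℤ, (a = 0 ∨ a = 1) → (b = 0 ∨ b = 1) →
      (c = 0 ∨ c = 1) → (d = 0 ∨ d = 1) →
      f a b c * (1 - f b c d) =
        b * (1 - c) + (b * c * (1 - d) - a * b * (1 - c)) := by
    rintro a b c d (rfl|rfl) (rfl|rfl) (rfl|rfl) (rfl|rfl) <;>
      simp [h000, h001, h010, h011, h100, h101, h110, h111]
  have hre : ∑ i : ZMod L, s (i - 1) * s i * (1 - s (i + 1)) =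
      ∑ i : ZMod L, s i * s (i + 1) * (1 - s (i + 2)) := by
    apply Fintype.sum_bijective _ (Equiv.subRight (1 : ZMod L)).bijective
    intro i
    have h1 : i - 1 + 1 = i := by ring
    have h2 : i - 1 + 2 = i + 1 := by ring
    simp only [Equiv.subRight_apply, h1, h2]
  calc ∑ i : ZMod L, f (s (i - 1)) (s i) (s (i + 1)) *
          (1 - f (s i) (s (i + 1)) (s (i + 2)))
      = ∑ i : ZMod L, (s i * (1 - s (i + 1)) +
          (s i * s (i + 1) * (1 - s (i + 2)) - s (i - 1) * s i * (1 - s (i + 1)))) := by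
        exact Finset.sum_congr rfl fun i _ =>
          key _ _ _ _ (hs _) (hs _) (hs _) (hs _)
    _ = ∑ i : ZMod L, s i * (1 - s (i + 1)) := by
        rw [Finset.sum_add_distrib, Finset.sum_sub_distrib, hre]
        ring
end

section
/- For rule 142 (truth table f(0,0,0)=0, f(0,0,1)=1, f(0,1,0)=1, f(0,1,1)=1, f(1,0,0)=0, f(1,0,1)=0, f(1,1,0)=0, f(1,1,1)=1), the function ξ(x0,x1) = x0 - x0*x1 and the current J(x0,x1,x2) = -x0*x1 + x0*x1*x2 satisfy the discrete conservation law ξ(f(x0,x1,x2), f(x1,x2,x3)) - ξ(x1,x2) = J(x0,x1,x2) - J(x1,x2,x3) for all x0,x1,x2,x3 ∈ {0,1}. -/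
/-- The Hattori–Takesue conservation condition for the second-order invariant
ξ(x0,x1)=x0-x0*x1 of rule 142, with current J(x0,x1,x2) = -x0*x1 + x0*x1*x2. -/
theorem rule142_second_order_conservation
    (f : ℤ → ℤ → ℤ → ℤ)
    (h000 : f 0 0 0 = 0) (h001 : f 0 0 1 = 1) (h010 : f 0 1 0 = 1)
    (h011 : f 0 1 1 = 1) (h100 : f 1 0 0 = 0) (h101 : f 1 0 1 = 0)
    (h110 : f 1 1 0 = 0) (h111 : f 1 1 1 = 1)
    (ξ : ℤ → ℤ → ℤ) (hξ : ∀ x0 x1, ξ x0 x1 = x0 - x0 * x1)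
    (J : ℤ → ℤ → ℤ → ℤ) (hJ : ∀ x0 x1 x2, J x0 x1 x2 = -x0 * x1 + x0 * x1 * x2) :
    ∀ x0 x1 x2 x3 : ℤ, (x0 = 0 ∨ x0 = 1) → (x1 = 0 ∨ x1 = 1) →
      (x2 = 0 ∨ x2 = 1) → (x3 = 0 ∨ x3 = 1) →
      ξ (f x0 x1 x2) (f x1 x2 x3) - ξ x1 x2 = J x0 x1 x2 - J x1 x2 x3 := by
  rintro x0 x1 x2 x3 (rfl|rfl) (rfl|rfl) (rfl|rfl) (rfl|rfl) <;>
    simp [hξ, hJ, h000, h001, h010, h011, h100, h101, h110, h111]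
end

section
/- For rule 14 (truth table f(0,0,0)=0, f(0,0,1)=1, f(0,1,0)=1, f(0,1,1)=1, f(1,0,0)=0, f(1,0,1)=0, f(1,1,0)=0, f(1,1,1)=0), the function ξ(x0,x1) = x0 - x0*x1 and current J(x0,x1,x2) = -x0*x1 satisfy ξ(f(x0,x1,x2), f(x1,x2,x3)) - ξ(x1,x2) = J(x0,x1,x2) - J(x1,x2,x3) for all x0,x1,x2,x3 ∈ {0,1}; consequently rule 14 conserves the number of '10' blocks on cyclic configurations of every length. -/
/-- Rule 14 satisfies the Hattori–Takesue condition with ξ(x0,x1)=x0-x0*x1 and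
J(x0,x1,x2) = -x0*x1; consequently it conserves the number of '10' blocks. -/
theorem rule14_second_order
    (f : ℤ → ℤ → ℤ → ℤ)
    (h000 : f 0 0 0 = 0) (h001 : f 0 0 1 = 1) (h010 : f 0 1 0 = 1)
    (h011 : f 0 1 1 = 1) (h100 : f 1 0 0 = 0) (h101 : f 1 0 1 = 0)
    (h110 : f 1 1 0 = 0) (h111 : f 1 1 1 = 0) :
    (∀ x0 x1 x2 x3 : ℤ, (x0 = 0 ∨ x0 = 1) → (x1 = 0 ∨ x1 = 1) →
      (x2 = 0 ∨ x2 = 1) → (x3 = 0 ∨ x3 = 1) →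
      ((f x0 x1 x2) - (f x0 x1 x2) * (f x1 x2 x3)) - (x1 - x1 * x2) =
        (-x0 * x1) - (-x1 * x2)) ∧
    (∀ (L : ℕ) [NeZero L] (s : ZMod L → ℤ), (∀ i, s i = 0 ∨ s i = 1) →
      ∑ i : ZMod L,
          (f (s (i - 1)) (s i) (s (i + 1))) *
            (1 - f (s i) (s (i + 1)) (s (i + 2))) =
        ∑ i : ZMod L, s i * (1 - s (i + 1))) := by
  have key : ∀ x0 x1 x2 x3 : ℤ, (x0 = 0 ∨ x0 = 1) → (x1 = 0 ∨ x1 = 1) →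
      (x2 = 0 ∨ x2 = 1) → (x3 = 0 ∨ x3 = 1) →
      ((f x0 x1 x2) - (f x0 x1 x2) * (f x1 x2 x3)) - (x1 - x1 * x2) =
        (-x0 * x1) - (-x1 * x2) := by
    rintro x0 x1 x2 x3 (rfl|rfl) (rfl|rfl) (rfl|rfl) (rfl|rfl) <;>
      simp [h000, h001, h010, h011, h100, h101, h110, h111]
  refine ⟨key, fun L _ s hs => ?_⟩
  have hdiff : ∀ i : ZMod L,
      (f (s (i - 1)) (s i) (s (i + 1))) * (1 - f (s i) (s (i + 1)) (s (i + 2)))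
        - s i * (1 - s (i + 1)) =
      (-(s (i-1)) * s i) - (-(s i) * s (i + 1)) := by
    intro i
    have := key (s (i-1)) (s i) (s (i+1)) (s (i+2)) (hs _) (hs _) (hs _) (hs _)
    ring_nf
    ring_nf at this
    linarith
  have : ∑ i : ZMod L,
      ((f (s (i - 1)) (s i) (s (i + 1))) * (1 - f (s i) (s (i + 1)) (s (i + 2)))
        - s i * (1 - s (i + 1))) = 0 := by
    rw [Finset.sum_congr rfl (fun i _ => hdiff i), Finset.sum_sub_distrib]
    have : ∑ i : ZMod L, (-(s (i - 1)) * s i) = ∑ i : ZMod L, (-(s i) * s (i + 1)) := by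
      apply Fintype.sum_equiv (Equiv.subRight (1 : ZMod L))
      intro i
      simp [sub_add_cancel]
    rw [this, sub_self]
  have h2 := Finset.sum_sub_distrib (s := (Finset.univ : Finset (ZMod L)))
    (f := fun i => (f (s (i - 1)) (s i) (s (i + 1))) * (1 - f (s i) (s (i + 1)) (s (i + 2))))
    (g := fun i => s i * (1 - s (i + 1)))
  rw [h2] at this
  linarith
end
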